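/- For all columns a, b over A: a ∨ b = a if and only if a ∧ b = b. -/
import Mathlib


/-- One step of Schensted's column matching: try to match the letter `x`
to the smallest still-unmatched letter `y` of the state with `x ≤ y`.
The state is `(remaining unmatched letters of b, matched letters of b)`. -/
def matchStep {n : ℕ} (x : Fin n) (st : Finset (Fin n) × Finset (Fin n)) :
    Finset (Fin n) × Finset (Fin n) :=
  let cand := st.1.filter (fun y => x ≤ y)
  if h : cand.Nonempty then (st.1.erase (cand.min' h), insert (cand.min' h) st.2)
  else st

/-- `colMatch a b` is the set `b_a` of connected (matched) letters of the column `b`,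
obtained by scanning the letters of the column `a` in increasing order and matching
each letter `x` of `a` to the smallest not-yet-matched letter `y` of `b` with `y ≥ x`. -/
def colMatch {n : ℕ} (a b : Finset (Fin n)) : Finset (Fin n) :=
  ((a.sort (· ≤ ·)).foldl (fun st x => matchStep x st) (b, (∅ : Finset (Fin n)))).2

/-- The column `a ∨ b`, with letter set `{a} ∪ b^a`. -/
def vee {n : ℕ} (a b : Finset (Fin n)) : Finset (Fin n) := a ∪ (b \ colMatch a b)

/-- The column `a ∧ b`, with letter set `b_a`. -/
def wedge {n : ℕ} (a b : Finset (Fin n)) : Finset (Fin n) := colMatch a b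

lemma matchStep_fst_subset {n : ℕ} (x : Fin n) (st : Finset (Fin n) × Finset (Fin n)) :
    (matchStep x st).1 ⊆ st.1 := by
  unfold matchStep
  dsimp only
  split
  · exact Finset.erase_subset _ _
  · exact subset_rfl

lemma matchStep_union {n : ℕ} (x : Fin n) (st : Finset (Fin n) × Finset (Fin n)) :
    (matchStep x st).1 ∪ (matchStep x st).2 = st.1 ∪ st.2 := by
  unfold matchStep
  dsimp only
  split
  case isTrue h =>
    have hm : (st.1.filter (fun y => x ≤ y)).min' h ∈ st.1 :=
      (Finset.mem_filter.mp (Finset.min'_mem _ h)).1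
    ext y
    by_cases hy : y = (st.1.filter (fun y => x ≤ y)).min' h
    · subst hy; simp [hm]
    · simp [Finset.mem_erase, hy]
  · rfl

lemma matchStep_disj {n : ℕ} (x : Fin n) (st : Finset (Fin n) × Finset (Fin n))
    (h : Disjoint st.1 st.2) : Disjoint (matchStep x st).1 (matchStep x st).2 := by
  unfold matchStep
  dsimp only
  split
  case isTrue hc =>
    rw [Finset.disjoint_left]
    intro y hy hy2
    rw [Finset.mem_erase] at hy
    rcases Finset.mem_insert.mp hy2 with h1 | h1
    · exact hy.1 h1
    · exact (Finset.disjoint_left.mp h) hy.2 h1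
  · exact h

lemma foldl_fst_subset {n : ℕ} (l : List (Fin n)) (st : Finset (Fin n) × Finset (Fin n)) :
    (l.foldl (fun st x => matchStep x st) st).1 ⊆ st.1 := by
  induction l generalizing st with
  | nil => exact subset_rfl
  | cons y t ih => exact (ih (matchStep y st)).trans (matchStep_fst_subset y st)

lemma foldl_union {n : ℕ} (l : List (Fin n)) (st : Finset (Fin n) × Finset (Fin n)) :
    (l.foldl (fun st x => matchStep x st) st).1 ∪ (l.foldl (fun st x => matchStep x st) st).2
      = st.1 ∪ st.2 := by
  induction l generalizing st with
  | nil => rfl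
  | cons y t ih => rw [List.foldl_cons, ih (matchStep y st), matchStep_union]

lemma foldl_disj {n : ℕ} (l : List (Fin n)) (st : Finset (Fin n) × Finset (Fin n))
    (h : Disjoint st.1 st.2) :
    Disjoint (l.foldl (fun st x => matchStep x st) st).1
      (l.foldl (fun st x => matchStep x st) st).2 := by
  induction l generalizing st with
  | nil => exact h
  | cons y t ih => exact ih (matchStep y st) (matchStep_disj y st h)

lemma notMem_matchStep_self {n : ℕ} (x : Fin n) (st : Finset (Fin n) × Finset (Fin n)) :
    x ∉ (matchStep x st).1 := by
  unfold matchStep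
  dsimp only
  split
  case isTrue h =>
    intro hx
    rw [Finset.mem_erase] at hx
    have hxc : x ∈ st.1.filter (fun y => x ≤ y) := Finset.mem_filter.mpr ⟨hx.2, le_refl x⟩
    have h1 : (st.1.filter (fun y => x ≤ y)).min' h ≤ x := Finset.min'_le _ _ hxc
    have h2 : x ≤ (st.1.filter (fun y => x ≤ y)).min' h :=
      (Finset.mem_filter.mp (Finset.min'_mem _ h)).2
    exact hx.1 (le_antisymm h2 h1)
  case isFalse h =>
    intro hx
    exact h ⟨x, Finset.mem_filter.mpr ⟨hx, le_refl x⟩⟩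

lemma notMem_foldl_of_mem {n : ℕ} (l : List (Fin n)) (x : Fin n)
    (st : Finset (Fin n) × Finset (Fin n)) (hx : x ∈ l) :
    x ∉ (l.foldl (fun st x => matchStep x st) st).1 := by
  induction l generalizing st with
  | nil => cases hx
  | cons y t ih =>
    rw [List.foldl_cons]
    rcases List.mem_cons.mp hx with h | h
    · subst h
      intro hmem
      exact notMem_matchStep_self x st (foldl_fst_subset t _ hmem)
    · exact ih _ h

/-- For all columns `a, b` over `A`: `a ∨ b = a` if and only if `a ∧ b = b`. -/
theorem vee_eq_left_iff_wedge_eq_right (n : ℕ) (hn : 1 ≤ n) (a b : Finset (Fin n)) :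
    vee a b = a ↔ wedge a b = b := by
  set l := a.sort (· ≤ ·) with hl
  set st := l.foldl (fun st x => matchStep x st) (b, (∅ : Finset (Fin n))) with hst
  have hunion : st.1 ∪ st.2 = b := by
    have := foldl_union l (b, (∅ : Finset (Fin n)))
    simpa using this
  have hdisj : Disjoint st.1 st.2 :=
    foldl_disj l (b, (∅ : Finset (Fin n))) (by simp)
  have hM : colMatch a b = st.2 := rfl
  have hdiff : b \ colMatch a b = st.1 := by
    rw [hM]
    ext y
    constructor
    · intro hy
      rw [Finset.mem_sdiff] at hy
      rcases Finset.mem_union.mp (hunion ▸ hy.1) with h | h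
      · exact h
      · exact absurd h hy.2
    · intro hy
      rw [Finset.mem_sdiff]
      exact ⟨hunion ▸ Finset.mem_union_left _ hy, Finset.disjoint_left.mp hdisj hy⟩
  have hda : Disjoint st.1 a := by
    rw [Finset.disjoint_left]
    intro y hy hya
    exact notMem_foldl_of_mem l y _ ((Finset.mem_sort _).mpr hya) hy
  unfold vee wedge
  rw [hdiff, hM]
  constructor
  · intro h
    have h1 : st.1 ⊆ a := by
      intro y hy
      exact h ▸ Finset.mem_union_right _ hy
    have h2 : st.1 = ∅ := by
      rw [← Finset.subset_empty]
      intro y hy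
      exact absurd (h1 hy) (Finset.disjoint_left.mp hda hy)
    rw [← hunion, h2, Finset.empty_union]
  · intro h
    have h2 : st.1 = ∅ := by
      rw [← Finset.subset_empty]
      intro y hy
      exact absurd (h ▸ Finset.disjoint_left.mp hdisj hy) (not_not_intro (hunion ▸ Finset.mem_union_left _ hy))
    rw [h2]
    simp
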